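/- arXiv:2603.14546 — 4 statements merged into one kernel-verified Lean document; each statement's English description precedes it below -/
import Mathlib

section
/- Let Q satisfy: twice continuously differentiable, Q' < 0, Q'' ≥ 0, and Q'(u) + u·Q''(u) < 0 on [0, X+S]. Fix γ ∈ [0,1] and define g(x,s) = e + x·Q(x+s) + (X-x)·Q(X + S - (1-γ)(x+s)) on [0,X] × [0,S]. Then for each fixed s, g(·, s) is strictly concave in x, and for each fixed x, g(x, ·) is convex in s. -/
private lemma aux_comp_add {f f' : ℝ → ℝ} {A b x : ℝ}
    (hf : ∀ u ∈ Set.Ioo (0:ℝ) A, HasDerivAt f (f' u) u)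
    (hmem : x + b ∈ Set.Ioo (0:ℝ) A) :
    HasDerivAt (fun y => f (y + b)) (f' (x + b)) x := by
  simpa [Function.comp_def] using (hf _ hmem).comp x ((hasDerivAt_id x).add_const b)

private lemma aux_comp_lin {f f' : ℝ → ℝ} {A γ b x : ℝ} (hγ1 : γ ≤ 1)
    (hf : ∀ u ∈ Set.Ioo (0:ℝ) A, HasDerivAt f (f' u) u)
    (hmem : γ < 1 → A - (1 - γ) * (x + b) ∈ Set.Ioo (0:ℝ) A) :
    HasDerivAt (fun y => f (A - (1 - γ) * (y + b)))
      (-(1 - γ) * f' (A - (1 - γ) * (x + b))) x := by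
  rcases lt_or_eq_of_le hγ1 with h | h
  · have inner : HasDerivAt (fun y => A - (1 - γ) * (y + b)) (-(1 - γ)) x := by
      simpa using (((hasDerivAt_id x).add_const b).const_mul (1 - γ)).const_sub A
    simpa [mul_comm, Function.comp_def] using (hf _ (hmem h)).comp x inner
  · subst h
    simpa using hasDerivAt_const x (f A)

theorem stmt_5 (Q : ℝ → ℝ) (X S e γ : ℝ) (hX : 0 < X) (hS : 0 < S)
    (hγ : γ ∈ Set.Icc (0:ℝ) 1)
    (hC : ContDiffOn ℝ 2 Q (Set.Icc 0 (X + S)))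
    (hQ' : ∀ u ∈ Set.Icc (0:ℝ) (X + S), deriv Q u < 0)
    (hQ'' : ∀ u ∈ Set.Icc (0:ℝ) (X + S), 0 ≤ deriv (deriv Q) u)
    (hxQ' : ∀ u ∈ Set.Icc (0:ℝ) (X + S), deriv Q u + u * deriv (deriv Q) u < 0)
    (g : ℝ → ℝ → ℝ)
    (hg : g = fun x s => e + x * Q (x + s) + (X - x) * Q (X + S - (1 - γ) * (x + s))) :
    (∀ s ∈ Set.Icc (0:ℝ) S, StrictConcaveOn ℝ (Set.Icc 0 X) (fun x => g x s)) ∧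
    (∀ x ∈ Set.Icc (0:ℝ) X, ConvexOn ℝ (Set.Icc 0 S) (fun s => g x s)) := by
  obtain ⟨hγ0, hγ1⟩ := hγ
  have hQcont : ContinuousOn Q (Set.Icc 0 (X + S)) := hC.continuousOn
  have hCo : ContDiffOn ℝ 2 Q (Set.Ioo 0 (X + S)) := hC.mono Set.Ioo_subset_Icc_self
  have hQdiff : ∀ u ∈ Set.Ioo (0:ℝ) (X + S), HasDerivAt Q (deriv Q u) u := by
    intro u hu
    exact ((hCo.differentiableOn (by norm_num)).differentiableAt
      (isOpen_Ioo.mem_nhds hu)).hasDerivAt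
  have hQ'co : ContDiffOn ℝ 1 (deriv Q) (Set.Ioo 0 (X + S)) :=
    hCo.deriv_of_isOpen isOpen_Ioo (by norm_num)
  have hQ'diff : ∀ u ∈ Set.Ioo (0:ℝ) (X + S), HasDerivAt (deriv Q) (deriv (deriv Q) u) u := by
    intro u hu
    exact ((hQ'co.differentiableOn (by norm_num)).differentiableAt
      (isOpen_Ioo.mem_nhds hu)).hasDerivAt
  constructor
  · -- strict concavity in x
    intro s hs
    obtain ⟨hs0, hsS⟩ := hs
    have hu_mem : ∀ x ∈ Set.Ioo (0:ℝ) X, x + s ∈ Set.Ioo (0:ℝ) (X + S) := by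
      intro x hx; exact ⟨by nlinarith [hx.1], by nlinarith [hx.2]⟩
    have hv_mem : γ < 1 → ∀ x ∈ Set.Ioo (0:ℝ) X,
        X + S - (1 - γ) * (x + s) ∈ Set.Ioo (0:ℝ) (X + S) := by
      intro h x hx
      constructor
      · nlinarith [hx.1, hx.2]
      · nlinarith [hx.1]
    have hu_icc : ∀ x ∈ Set.Ioo (0:ℝ) X, x + s ∈ Set.Icc (0:ℝ) (X + S) :=
      fun x hx => Set.Ioo_subset_Icc_self (hu_mem x hx)
    have hv_icc : ∀ x ∈ Set.Icc (0:ℝ) X,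
        X + S - (1 - γ) * (x + s) ∈ Set.Icc (0:ℝ) (X + S) := by
      intro x hx
      constructor
      · nlinarith [hx.1, hx.2]
      · nlinarith [hx.1]
    set F1 : ℝ → ℝ := fun y => Q (y + s) + y * deriv Q (y + s)
      - Q (X + S - (1 - γ) * (y + s))
      - (X - y) * ((1 - γ) * deriv Q (X + S - (1 - γ) * (y + s))) with hF1
    set F2 : ℝ → ℝ := fun y => 2 * deriv Q (y + s) + y * deriv (deriv Q) (y + s)
      + (1 - γ) * (2 * deriv Q (X + S - (1 - γ) * (y + s))
        + (1 - γ) * (X - y) * deriv (deriv Q) (X + S - (1 - γ) * (y + s))) with hF2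
    have hD1 : ∀ x ∈ Set.Ioo (0:ℝ) X, HasDerivAt (fun y => g y s) (F1 x) x := by
      intro x hx
      rw [hg]
      have t1 := (hasDerivAt_id x).mul (aux_comp_add hQdiff (hu_mem x hx))
      have t2 := ((hasDerivAt_id x).const_sub X).mul
        (aux_comp_lin hγ1 hQdiff (fun h => hv_mem h x hx))
      have := ((hasDerivAt_const x e).add t1).add t2
      refine this.congr_deriv ?_
      simp only [hF1, id]
      ring
    have hD2 : ∀ x ∈ Set.Ioo (0:ℝ) X, HasDerivAt F1 (F2 x) x := by
      intro x hx
      have p1 := aux_comp_add hQdiff (hu_mem x hx)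
      have p2 := (hasDerivAt_id x).mul (aux_comp_add hQ'diff (hu_mem x hx))
      have p3 := aux_comp_lin hγ1 hQdiff (fun h => hv_mem h x hx)
      have p4 := ((hasDerivAt_id x).const_sub X).mul
        ((aux_comp_lin hγ1 hQ'diff (fun h => hv_mem h x hx)).const_mul (1 - γ))
      have := ((p1.add p2).sub p3).sub p4
      refine this.congr_deriv ?_
      simp only [hF2, id]
      ring
    have hsecond : ∀ x ∈ Set.Ioo (0:ℝ) X,
        deriv (deriv (fun y => g y s)) x = F2 x := by
      intro x hx
      have hev : deriv (fun y => g y s) =ᶠ[nhds x] F1 := by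
        filter_upwards [isOpen_Ioo.mem_nhds hx] with y hy
        exact (hD1 y hy).deriv
      rw [hev.deriv_eq, (hD2 x hx).deriv]
    have hcont : ContinuousOn (fun x => g x s) (Set.Icc 0 X) := by
      rw [hg]
      have c1 : ContinuousOn (fun y : ℝ => Q (y + s)) (Set.Icc 0 X) :=
        hQcont.comp (continuous_id.add continuous_const).continuousOn
          (fun y hy => ⟨by nlinarith [hy.1], by nlinarith [hy.2]⟩)
      have c2 : ContinuousOn (fun y : ℝ => Q (X + S - (1 - γ) * (y + s)))
          (Set.Icc 0 X) :=
        hQcont.comp (continuous_const.sub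
          (continuous_const.mul (continuous_id.add continuous_const))).continuousOn
          (fun y hy => hv_icc y hy)
      exact (continuousOn_const.add (continuousOn_id.mul c1)).add
        ((continuousOn_const.sub continuousOn_id).mul c2)
    apply strictConcaveOn_of_deriv2_neg (convex_Icc 0 X) hcont
    intro x hx
    rw [interior_Icc] at hx
    have hxs := hu_icc x hx
    have hvx := hv_icc x (Set.Ioo_subset_Icc_self hx)
    have ha := hQ' _ hxs
    have hb := hQ'' _ hxs
    have hab := hxQ' _ hxs
    have hc := hQ' _ hvx
    have hd := hQ'' _ hvx
    have hcd := hxQ' _ hvx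
    have key : F2 x < 0 := by
      have h1 : x * deriv (deriv Q) (x + s) ≤ (x + s) * deriv (deriv Q) (x + s) := by
        nlinarith
      have h2 : 2 * deriv Q (x + s) + x * deriv (deriv Q) (x + s) < 0 := by linarith
      have hvge : (1 - γ) * (X - x) ≤ X + S - (1 - γ) * (x + s) := by
        nlinarith [hx.1, hx.2]
      have h3 : (1 - γ) * (X - x) * deriv (deriv Q) (X + S - (1 - γ) * (x + s))
          ≤ (X + S - (1 - γ) * (x + s)) * deriv (deriv Q) (X + S - (1 - γ) * (x + s)) :=
        mul_le_mul_of_nonneg_right hvge hd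
      have h4 : 2 * deriv Q (X + S - (1 - γ) * (x + s))
          + (1 - γ) * (X - x) * deriv (deriv Q) (X + S - (1 - γ) * (x + s)) < 0 := by
        linarith
      have h5 : (1 - γ) * (2 * deriv Q (X + S - (1 - γ) * (x + s))
          + (1 - γ) * (X - x) * deriv (deriv Q) (X + S - (1 - γ) * (x + s))) ≤ 0 :=
        mul_nonpos_of_nonneg_of_nonpos (by linarith) h4.le
      rw [hF2]
      dsimp only
      linarith
    calc deriv^[2] (fun y => g y s) x = F2 x := by
          simp only [Function.iterate_succ, Function.iterate_zero, Function.comp,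
            id]
          exact hsecond x hx
      _ < 0 := key
  · -- convexity in s
    intro x hx
    obtain ⟨hx0, hxX⟩ := hx
    have hfun : (fun t => g x t) = (fun t => e + x * Q (t + x)
        + (X - x) * Q (X + S - (1 - γ) * (t + x))) := by
      funext t
      rw [hg]
      dsimp only
      rw [add_comm x t]
    rw [hfun]
    have hu_mem : ∀ t ∈ Set.Ioo (0:ℝ) S, t + x ∈ Set.Ioo (0:ℝ) (X + S) := by
      intro t ht; exact ⟨by nlinarith [ht.1], by nlinarith [ht.2]⟩
    have hv_mem : γ < 1 → ∀ t ∈ Set.Ioo (0:ℝ) S,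
        X + S - (1 - γ) * (t + x) ∈ Set.Ioo (0:ℝ) (X + S) := by
      intro h t ht
      constructor
      · nlinarith [ht.1, ht.2]
      · nlinarith [ht.1]
    have hu_icc : ∀ t ∈ Set.Ioo (0:ℝ) S, t + x ∈ Set.Icc (0:ℝ) (X + S) :=
      fun t ht => Set.Ioo_subset_Icc_self (hu_mem t ht)
    have hv_icc : ∀ t ∈ Set.Icc (0:ℝ) S,
        X + S - (1 - γ) * (t + x) ∈ Set.Icc (0:ℝ) (X + S) := by
      intro t ht
      constructor
      · nlinarith [ht.1, ht.2]
      · nlinarith [ht.1]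
    set G1 : ℝ → ℝ := fun t => x * deriv Q (t + x)
      - (X - x) * ((1 - γ) * deriv Q (X + S - (1 - γ) * (t + x))) with hG1
    set G2 : ℝ → ℝ := fun t => x * deriv (deriv Q) (t + x)
      + (X - x) * ((1 - γ) * ((1 - γ) * deriv (deriv Q) (X + S - (1 - γ) * (t + x)))) with hG2
    have hD1 : ∀ t ∈ Set.Ioo (0:ℝ) S, HasDerivAt (fun t => e + x * Q (t + x)
        + (X - x) * Q (X + S - (1 - γ) * (t + x))) (G1 t) t := by
      intro t ht
      have t1 := (aux_comp_add hQdiff (hu_mem t ht)).const_mul x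
      have t2 := (aux_comp_lin hγ1 hQdiff (fun h => hv_mem h t ht)).const_mul (X - x)
      have := ((hasDerivAt_const t e).add t1).add t2
      refine this.congr_deriv ?_
      simp only [hG1]
      ring
    have hD2 : ∀ t ∈ Set.Ioo (0:ℝ) S, HasDerivAt G1 (G2 t) t := by
      intro t ht
      have p1 := (aux_comp_add hQ'diff (hu_mem t ht)).const_mul x
      have p2 := ((aux_comp_lin hγ1 hQ'diff (fun h => hv_mem h t ht)).const_mul
        (1 - γ)).const_mul (X - x)
      have := p1.sub p2
      refine this.congr_deriv ?_
      simp only [hG2]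
      ring
    have hcont : ContinuousOn (fun t : ℝ => e + x * Q (t + x)
        + (X - x) * Q (X + S - (1 - γ) * (t + x))) (Set.Icc 0 S) := by
      have c1 : ContinuousOn (fun t : ℝ => Q (t + x)) (Set.Icc 0 S) :=
        hQcont.comp (continuous_id.add continuous_const).continuousOn
          (fun t ht => ⟨by nlinarith [ht.1], by nlinarith [ht.2]⟩)
      have c2 : ContinuousOn (fun t : ℝ => Q (X + S - (1 - γ) * (t + x)))
          (Set.Icc 0 S) :=
        hQcont.comp (continuous_const.sub
          (continuous_const.mul (continuous_id.add continuous_const))).continuousOn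
          (fun t ht => hv_icc t ht)
      exact (continuousOn_const.add (continuousOn_const.mul c1)).add
        (continuousOn_const.mul c2)
    apply convexOn_of_deriv2_nonneg (convex_Icc 0 S) hcont
    · rw [interior_Icc]
      intro t ht
      exact (hD1 t ht).differentiableAt.differentiableWithinAt
    · rw [interior_Icc]
      intro t ht
      have hev : G1 =ᶠ[nhds t] deriv (fun t => e + x * Q (t + x)
          + (X - x) * Q (X + S - (1 - γ) * (t + x))) := by
        filter_upwards [isOpen_Ioo.mem_nhds ht] with y hy
        exact ((hD1 y hy).deriv).symm
      exact ((hev.differentiableAt_iff).mp (hD2 t ht).differentiableAt).differentiableWithinAt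
    · intro t ht
      rw [interior_Icc] at ht
      have hev : deriv (fun t => e + x * Q (t + x)
          + (X - x) * Q (X + S - (1 - γ) * (t + x))) =ᶠ[nhds t] G1 := by
        filter_upwards [isOpen_Ioo.mem_nhds ht] with y hy
        exact (hD1 y hy).deriv
      have h2 : deriv^[2] (fun t => e + x * Q (t + x)
          + (X - x) * Q (X + S - (1 - γ) * (t + x))) t = G2 t := by
        simp only [Function.iterate_succ, Function.iterate_zero, Function.comp, id]
        rw [hev.deriv_eq, (hD2 t ht).deriv]
      rw [h2, hG2]
      have hd1 := hQ'' _ (hu_icc t ht)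
      have hd2 := hQ'' _ (hv_icc t (Set.Ioo_subset_Icc_self ht))
      have h1γ : (0:ℝ) ≤ 1 - γ := by linarith
      exact add_nonneg (mul_nonneg hx0 hd1)
        (mul_nonneg (by linarith) (mul_nonneg h1γ (mul_nonneg h1γ hd2)))
end

section
/- Let Q be twice continuously differentiable with Q' < 0 and Q'' ≥ 0 on [0, X+S], and let γ ∈ [0,1]. Define g(x,s) = e + x·Q(x+s) + (X-x)·Q(X+S - (1-γ)(x+s)). Then the mixed partial ∂²g/∂x∂s is strictly negative on [0,X] × [0,S] whenever Q'(u) + u·Q''(u) < 0 holds for all u in [0, X+S]; consequently g is strictly submodular. -/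
set_option maxHeartbeats 2000000 in
theorem stmt_6 (Q : ℝ → ℝ) (X S e γ : ℝ) (hX : 0 < X) (hS : 0 < S)
    (hγ : γ ∈ Set.Icc (0:ℝ) 1)
    (hC : ContDiffOn ℝ 2 Q (Set.Icc 0 (X + S)))
    (hQ' : ∀ u ∈ Set.Icc (0:ℝ) (X + S), deriv Q u < 0)
    (hQ'' : ∀ u ∈ Set.Icc (0:ℝ) (X + S), 0 ≤ deriv (deriv Q) u)
    (hxQ' : ∀ u ∈ Set.Icc (0:ℝ) (X + S), deriv Q u + u * deriv (deriv Q) u < 0)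
    (g : ℝ → ℝ → ℝ)
    (hg : g = fun x s => e + x * Q (x + s) + (X - x) * Q (X + S - (1 - γ) * (x + s))) :
    (∀ x ∈ Set.Icc (0:ℝ) X, ∀ s ∈ Set.Icc (0:ℝ) S,
      deriv Q (x + s) + x * deriv (deriv Q) (x + s)
        + (1 - γ) * deriv Q (X + S - (1 - γ) * (x + s))
        + (1 - γ) ^ 2 * (X - x) * deriv (deriv Q) (X + S - (1 - γ) * (x + s)) < 0) ∧
    (∀ x x' s s' : ℝ, x ∈ Set.Icc (0:ℝ) X → x' ∈ Set.Icc (0:ℝ) X →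
      s ∈ Set.Icc (0:ℝ) S → s' ∈ Set.Icc (0:ℝ) S → x < x' → s < s' →
      g x' s' + g x s < g x s' + g x' s) := by
  obtain ⟨hγ0, hγ1⟩ := hγ
  set β := 1 - γ with hβdef
  clear_value β
  have hβ0 : 0 ≤ β := by rw [hβdef]; linarith
  have hβ1 : β ≤ 1 := by rw [hβdef]; linarith
  -- differentiability on the open interval
  have hOpen : IsOpen (Set.Ioo (0:ℝ) (X+S)) := isOpen_Ioo
  have hCIoo : ContDiffOn ℝ 2 Q (Set.Ioo 0 (X+S)) := hC.mono Set.Ioo_subset_Icc_self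
  have hdQ : ∀ u ∈ Set.Ioo (0:ℝ) (X+S), HasDerivAt Q (deriv Q u) u := by
    intro u hu
    exact ((hCIoo.differentiableOn (by norm_num)).differentiableAt
      (hOpen.mem_nhds hu)).hasDerivAt
  have hC1 : ContDiffOn ℝ 1 (deriv Q) (Set.Ioo 0 (X+S)) :=
    hCIoo.deriv_of_isOpen hOpen (by norm_num)
  have hddQ : ∀ u ∈ Set.Ioo (0:ℝ) (X+S), HasDerivAt (deriv Q) (deriv (deriv Q) u) u := by
    intro u hu
    exact ((hC1.differentiableOn (by norm_num)).differentiableAt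
      (hOpen.mem_nhds hu)).hasDerivAt
  constructor
  · -- Part 1: the mixed partial is negative
    rintro x ⟨hx0, hxX⟩ s ⟨hs0, hsS⟩
    set u := X + S - β*(x+s) with hudef
    have hv : x + s ∈ Set.Icc (0:ℝ) (X+S) := ⟨by linarith, by linarith⟩
    have hu1 : 0 ≤ u := by
      have := mul_le_mul_of_nonneg_right hβ1 (show (0:ℝ) ≤ x+s by linarith)
      rw [hudef]; nlinarith
    have hu2 : u ≤ X + S := by
      have := mul_nonneg hβ0 (show (0:ℝ) ≤ x+s by linarith)
      rw [hudef]; nlinarith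
    have h1 := hxQ' (x+s) hv
    have h2 := hxQ' u ⟨hu1, hu2⟩
    have h3 := hQ'' (x+s) hv
    have h4 := hQ'' u ⟨hu1, hu2⟩
    have h5 : β*(X-x) ≤ u := by
      have := mul_le_mul_of_nonneg_right hβ1 (show (0:ℝ) ≤ X+s by linarith)
      rw [hudef]; nlinarith
    have keyA : deriv Q (x+s) + x * deriv (deriv Q) (x+s) < 0 := by nlinarith
    have keyB : β * deriv Q u + β^2*(X-x) * deriv (deriv Q) u ≤ 0 := by
      have h6 : deriv Q u + β*(X-x) * deriv (deriv Q) u < 0 := by nlinarith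
      have h7 := mul_nonneg hβ0 (neg_nonneg.mpr h6.le)
      nlinarith [h7]
    nlinarith
  · -- Part 2: strict submodularity
    intro x x' s s' hx hx' hs hs' hxx hss
    obtain ⟨hs0, hsS⟩ := hs
    obtain ⟨hs'0, hs'S⟩ := hs'
    subst hg
    -- derivative of the one-slice map
    have slice : ∀ t ∈ Set.Icc (0:ℝ) S, ∀ a ∈ Set.Ioo (0:ℝ) X,
        HasDerivAt (fun a => e + a * Q (a+t) + (X-a) * Q (X+S-β*(a+t)))
          (Q (a+t) + a * deriv Q (a+t)
            - Q (X+S-β*(a+t)) - β*(X-a)*deriv Q (X+S-β*(a+t))) a := by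
      rintro t ⟨ht0, htS⟩ a ⟨ha0, haX⟩
      have hv : a + t ∈ Set.Ioo (0:ℝ) (X+S) := ⟨by linarith, by linarith⟩
      have inner1 : HasDerivAt (fun a : ℝ => a + t) 1 a := (hasDerivAt_id a).add_const t
      have hQ1 : HasDerivAt (fun a : ℝ => Q (a+t)) (deriv Q (a+t)) a := by
        simpa [Function.comp_def] using (hdQ _ hv).comp a inner1
      have hP1 : HasDerivAt (fun a : ℝ => a * Q (a+t)) (Q (a+t) + a * deriv Q (a+t)) a := by
        simpa [mul_comm, add_comm, Pi.mul_def] using (hasDerivAt_id a).mul hQ1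
      have inner2 : HasDerivAt (fun a : ℝ => X+S-β*(a+t)) (-β) a := by
        simpa [Pi.sub_def] using (hasDerivAt_const a (X+S)).sub (inner1.const_mul β)
      have hQ2 : HasDerivAt (fun a : ℝ => Q (X+S-β*(a+t)))
          (deriv Q (X+S-β*(a+t)) * (-β)) a := by
        rcases eq_or_lt_of_le hβ0 with hb | hb
        · have : (fun a : ℝ => Q (X+S-β*(a+t))) = fun _ => Q (X+S) := by
            funext z; rw [← hb]; ring_nf
          rw [this, ← hb]
          simpa using hasDerivAt_const a (Q (X+S))
        · have hu : X+S-β*(a+t) ∈ Set.Ioo (0:ℝ) (X+S) := by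
            constructor
            · nlinarith
            · nlinarith
          exact (hdQ _ hu).comp a inner2
      have hP2 : HasDerivAt (fun a : ℝ => (X-a) * Q (X+S-β*(a+t)))
          (- Q (X+S-β*(a+t)) - β*(X-a)*deriv Q (X+S-β*(a+t))) a := by
        have := ((hasDerivAt_const a X).sub (hasDerivAt_id a)).mul hQ2
        refine this.congr_deriv ?_
        simp only [Pi.sub_apply, id_eq]
        ring
      have := (hP1.const_add e).add hP2
      refine this.congr_deriv ?_
      ring
    -- strict antitonicity in x of the difference in s
    set F : ℝ → ℝ := fun a =>
      (e + a * Q (a+s') + (X-a) * Q (X+S-β*(a+s')))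
      - (e + a * Q (a+s) + (X-a) * Q (X+S-β*(a+s))) with hFdef
    have hQcont : ContinuousOn Q (Set.Icc 0 (X+S)) := hC.continuousOn
    have hFcont : ContinuousOn F (Set.Icc (0:ℝ) X) := by
      have c1 : ∀ t ∈ Set.Icc (0:ℝ) S,
          ContinuousOn (fun a : ℝ => Q (a+t)) (Set.Icc (0:ℝ) X) := by
        rintro t ⟨ht0, htS⟩
        apply hQcont.comp (by fun_prop)
        rintro a ⟨ha0, haX⟩
        simp only [Set.mem_Icc]
        constructor <;> linarith
      have c2 : ∀ t ∈ Set.Icc (0:ℝ) S,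
          ContinuousOn (fun a : ℝ => Q (X+S-β*(a+t))) (Set.Icc (0:ℝ) X) := by
        rintro t ⟨ht0, htS⟩
        apply hQcont.comp (by fun_prop)
        rintro a ⟨ha0, haX⟩
        have h1 := mul_le_mul_of_nonneg_right hβ1 (show (0:ℝ) ≤ a+t by linarith)
        have h2 := mul_nonneg hβ0 (show (0:ℝ) ≤ a+t by linarith)
        simp only [Set.mem_Icc]
        constructor <;> nlinarith
      apply ContinuousOn.sub
      · exact (continuousOn_const.add (continuousOn_id.mul (c1 s' ⟨hs'0, hs'S⟩))).add
          ((continuousOn_const.sub continuousOn_id).mul (c2 s' ⟨hs'0, hs'S⟩))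
      · exact (continuousOn_const.add (continuousOn_id.mul (c1 s ⟨hs0, hsS⟩))).add
          ((continuousOn_const.sub continuousOn_id).mul (c2 s ⟨hs0, hsS⟩))
    have hFderiv : ∀ a ∈ interior (Set.Icc (0:ℝ) X), deriv F a < 0 := by
      rw [interior_Icc]
      rintro a ha
      obtain ⟨ha0, haX⟩ := ha
      have hd : HasDerivAt F
          ((Q (a+s') + a * deriv Q (a+s')
            - Q (X+S-β*(a+s')) - β*(X-a)*deriv Q (X+S-β*(a+s')))
          - (Q (a+s) + a * deriv Q (a+s)
            - Q (X+S-β*(a+s)) - β*(X-a)*deriv Q (X+S-β*(a+s)))) a :=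
        (slice s' ⟨hs'0, hs'S⟩ a ⟨ha0, haX⟩).sub (slice s ⟨hs0, hsS⟩ a ⟨ha0, haX⟩)
      rw [hd.deriv]
      -- h(t) = Q(a+t) + a * Q'(a+t) is strictly decreasing on [s,s']
      have hmemIoo : ∀ t ∈ Set.Icc s s', a + t ∈ Set.Ioo (0:ℝ) (X+S) := by
        rintro t ⟨ht1, ht2⟩
        exact ⟨by linarith, by linarith⟩
      have hmemIcc : ∀ t ∈ Set.Icc s s', a + t ∈ Set.Icc (0:ℝ) (X+S) := by
        rintro t ht
        have := hmemIoo t ht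
        exact ⟨le_of_lt this.1, le_of_lt this.2⟩
      have hhd : ∀ t ∈ Set.Icc s s',
          HasDerivAt (fun t => Q (a+t) + a * deriv Q (a+t))
            (deriv Q (a+t) + a * deriv (deriv Q) (a+t)) t := by
        intro t ht
        have inner : HasDerivAt (fun t : ℝ => a + t) 1 t := by
          simpa using (hasDerivAt_id t).const_add a
        have h1 : HasDerivAt (fun t : ℝ => Q (a+t)) (deriv Q (a+t)) t := by
          simpa [Function.comp_def] using (hdQ _ (hmemIoo t ht)).comp t inner
        have h2 : HasDerivAt (fun t : ℝ => deriv Q (a+t)) (deriv (deriv Q) (a+t)) t := by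
          simpa [Function.comp_def] using (hddQ _ (hmemIoo t ht)).comp t inner
        simpa [Pi.add_def] using h1.add (h2.const_mul a)
      have hA : StrictAntiOn (fun t => Q (a+t) + a * deriv Q (a+t)) (Set.Icc s s') := by
        apply strictAntiOn_of_deriv_neg (convex_Icc s s')
        · intro t ht
          exact (hhd t ht).continuousAt.continuousWithinAt
        · rw [interior_Icc]
          intro t ht
          have ht' : t ∈ Set.Icc s s' := ⟨le_of_lt ht.1, le_of_lt ht.2⟩
          rw [(hhd t ht').deriv]
          have hm := hmemIcc t ht'
          have := hxQ' (a+t) hm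
          have h'' := hQ'' (a+t) hm
          have : 0 ≤ t := le_trans hs0 ht'.1
          nlinarith [hxQ' (a+t) hm, hQ'' (a+t) hm]
      have hAlt : Q (a+s') + a * deriv Q (a+s') < Q (a+s) + a * deriv Q (a+s) :=
        hA (Set.left_mem_Icc.mpr (le_of_lt hss)) (Set.right_mem_Icc.mpr (le_of_lt hss)) hss
      -- k(t) = Q(u_t) + β(X-a) Q'(u_t) is monotone nondecreasing on [s,s']
      have hBle : Q (X+S-β*(a+s)) + β*(X-a)*deriv Q (X+S-β*(a+s))
          ≤ Q (X+S-β*(a+s')) + β*(X-a)*deriv Q (X+S-β*(a+s')) := by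
        rcases eq_or_lt_of_le hβ0 with hb | hb
        · rw [← hb]; norm_num
        · have humem : ∀ t ∈ Set.Icc s s', X+S-β*(a+t) ∈ Set.Ioo (0:ℝ) (X+S) := by
            rintro t ⟨ht1, ht2⟩
            constructor
            · nlinarith
            · nlinarith
          have hkd : ∀ t ∈ Set.Icc s s',
              HasDerivAt (fun t => Q (X+S-β*(a+t)) + β*(X-a)*deriv Q (X+S-β*(a+t)))
                (deriv Q (X+S-β*(a+t)) * (-β)
                  + β*(X-a)*(deriv (deriv Q) (X+S-β*(a+t)) * (-β))) t := by
            intro t ht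
            have inner : HasDerivAt (fun t : ℝ => X+S-β*(a+t)) (-β) t := by
              have : HasDerivAt (fun t : ℝ => a + t) 1 t := by
                simpa using (hasDerivAt_id t).const_add a
              simpa [Pi.sub_def] using (hasDerivAt_const t (X+S)).sub (this.const_mul β)
            have h1 : HasDerivAt (fun t : ℝ => Q (X+S-β*(a+t)))
                (deriv Q (X+S-β*(a+t)) * (-β)) t := (hdQ _ (humem t ht)).comp t inner
            have h2 : HasDerivAt (fun t : ℝ => deriv Q (X+S-β*(a+t)))
                (deriv (deriv Q) (X+S-β*(a+t)) * (-β)) t :=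
              (hddQ _ (humem t ht)).comp (h := fun t : ℝ => X+S-β*(a+t)) t inner
            exact h1.add (h2.const_mul (β*(X-a)))
          have hmono : MonotoneOn
              (fun t => Q (X+S-β*(a+t)) + β*(X-a)*deriv Q (X+S-β*(a+t)))
              (Set.Icc s s') := by
            apply monotoneOn_of_deriv_nonneg (convex_Icc s s')
            · intro t ht
              exact (hkd t ht).continuousAt.continuousWithinAt
            · rw [interior_Icc]
              intro t ht
              have ht' : t ∈ Set.Icc s s' := ⟨le_of_lt ht.1, le_of_lt ht.2⟩
              exact (hkd t ht').differentiableAt.differentiableWithinAt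
            · rw [interior_Icc]
              intro t ht
              have ht' : t ∈ Set.Icc s s' := ⟨le_of_lt ht.1, le_of_lt ht.2⟩
              rw [(hkd t ht').deriv]
              have hu := humem t ht'
              have huIcc : X+S-β*(a+t) ∈ Set.Icc (0:ℝ) (X+S) :=
                ⟨le_of_lt hu.1, le_of_lt hu.2⟩
              have h2 := hxQ' _ huIcc
              have h4 := hQ'' _ huIcc
              have h5 : β*(X-a) ≤ X+S-β*(a+t) := by
                have h6 := mul_le_mul_of_nonneg_right hβ1
                  (show (0:ℝ) ≤ X+t by nlinarith [ht'.1])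
                nlinarith [ht'.1, ht'.2]
              have h7 : deriv Q (X+S-β*(a+t))
                  + β*(X-a)*deriv (deriv Q) (X+S-β*(a+t)) < 0 := by
                nlinarith [mul_nonneg (sub_nonneg.mpr h5) h4]
              nlinarith [mul_pos hb (neg_pos.mpr h7)]
          exact hmono (Set.left_mem_Icc.mpr (le_of_lt hss))
            (Set.right_mem_Icc.mpr (le_of_lt hss)) (le_of_lt hss)
      linarith
    have hanti : StrictAntiOn F (Set.Icc (0:ℝ) X) :=
      strictAntiOn_of_deriv_neg (convex_Icc 0 X) hFcont hFderiv
    have := hanti hx hx' hxx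
    simp only [hFdef] at this
    simp only []
    linarith
end

section
/- Let γ ∈ [0,1], X, S > 0. Define g(x,s) = e + x·Q(x+s) + (X-x)·Q(X + S - (1-γ)(x+s)) where Q is continuously differentiable with Q' < 0. The point (x*, s*) = ((1-γ)X/(2-γ), (γX + S)/(2-γ)) satisfies both first-order conditions ∂g/∂x(x*,s*) = 0 and ∂g/∂s(x*,s*) = 0. -/
theorem stmt_7 (Q : ℝ → ℝ) (X S e γ : ℝ) (hX : 0 < X) (hS : 0 < S)
    (hγ : γ ∈ Set.Icc (0:ℝ) 1)
    (hC : ContDiff ℝ 1 Q) (hQ' : ∀ u : ℝ, deriv Q u < 0)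
    (g : ℝ → ℝ → ℝ)
    (hg : g = fun x s => e + x * Q (x + s) + (X - x) * Q (X + S - (1 - γ) * (x + s))) :
    deriv (fun x => g x ((γ * X + S) / (2 - γ))) ((1 - γ) * X / (2 - γ)) = 0 ∧
    deriv (fun s => g ((1 - γ) * X / (2 - γ)) s) ((γ * X + S) / (2 - γ)) = 0 := by
  subst hg
  obtain ⟨hγ0, hγ1⟩ := hγ
  have h2 : (2 : ℝ) - γ ≠ 0 := by linarith
  set xs : ℝ := (1 - γ) * X / (2 - γ) with hxs
  set ss : ℝ := (γ * X + S) / (2 - γ) with hss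
  set u0 : ℝ := (X + S) / (2 - γ) with hu0
  have hQd : ∀ u : ℝ, HasDerivAt Q (deriv Q u) u := fun u =>
    (hC.differentiable one_ne_zero u).hasDerivAt
  have hx : xs + ss = u0 := by rw [hxs, hss, hu0, ← add_div]; congr 1; ring
  have hy : X + S - (1 - γ) * (xs + ss) = u0 := by
    rw [hx, hu0]; field_simp; ring
  constructor
  · have A : HasDerivAt (fun x : ℝ => x + ss) 1 xs := (hasDerivAt_id xs).add_const ss
    have B : HasDerivAt (fun x : ℝ => Q (x + ss)) (deriv Q u0 * 1) xs := by
      have hQ1 : HasDerivAt Q (deriv Q u0) (xs + ss) := hx ▸ hQd u0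
      exact hQ1.comp xs A
    have T2 : HasDerivAt (fun x : ℝ => x * Q (x + ss))
        (1 * Q (xs + ss) + xs * (deriv Q u0 * 1)) xs := (hasDerivAt_id xs).mul B
    have In : HasDerivAt (fun x : ℝ => X + S - (1 - γ) * (x + ss)) (-((1 - γ) * 1)) xs :=
      (A.const_mul (1 - γ)).const_sub (X + S)
    have Bc : HasDerivAt (fun x : ℝ => Q (X + S - (1 - γ) * (x + ss)))
        (deriv Q u0 * -((1 - γ) * 1)) xs := by
      have hQ1 : HasDerivAt Q (deriv Q u0) (X + S - (1 - γ) * (xs + ss)) := hy ▸ hQd u0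
      exact hQ1.comp xs In
    have T3 : HasDerivAt (fun x : ℝ => (X - x) * Q (X + S - (1 - γ) * (x + ss)))
        ((-1) * Q (X + S - (1 - γ) * (xs + ss)) + (X - xs) * (deriv Q u0 * -((1 - γ) * 1))) xs :=
      ((hasDerivAt_id xs).const_sub X).mul Bc
    have Tot := ((hasDerivAt_const xs e).add T2).add T3
    erw [Tot.deriv]
    rw [hy, hx]
    have hxe : xs = (1 - γ) * X / (2 - γ) := rfl
    rw [hxe]
    field_simp
    ring
  · have A : HasDerivAt (fun s : ℝ => xs + s) 1 ss := by
      simpa using (hasDerivAt_id ss).const_add xs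
    have B : HasDerivAt (fun s : ℝ => Q (xs + s)) (deriv Q u0 * 1) ss := by
      have hQ1 : HasDerivAt Q (deriv Q u0) (xs + ss) := hx ▸ hQd u0
      exact hQ1.comp ss A
    have T2 : HasDerivAt (fun s : ℝ => xs * Q (xs + s)) (xs * (deriv Q u0 * 1)) ss :=
      B.const_mul xs
    have In : HasDerivAt (fun s : ℝ => X + S - (1 - γ) * (xs + s)) (-((1 - γ) * 1)) ss :=
      (A.const_mul (1 - γ)).const_sub (X + S)
    have Bc : HasDerivAt (fun s : ℝ => Q (X + S - (1 - γ) * (xs + s)))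
        (deriv Q u0 * -((1 - γ) * 1)) ss := by
      have hQ1 : HasDerivAt Q (deriv Q u0) (X + S - (1 - γ) * (xs + ss)) := hy ▸ hQd u0
      exact hQ1.comp ss In
    have T3 : HasDerivAt (fun s : ℝ => (X - xs) * Q (X + S - (1 - γ) * (xs + s)))
        ((X - xs) * (deriv Q u0 * -((1 - γ) * 1))) ss := Bc.const_mul (X - xs)
    have Tot := ((hasDerivAt_const ss e).add T2).add T3
    erw [Tot.deriv]
    have hxe : xs = (1 - γ) * X / (2 - γ) := rfl
    rw [hxe]
    field_simp
    ring
end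

section
/- Let Q be strictly decreasing and convex with Q', Q'' continuous, Q' < 0, Q'' ≥ 0. Fix X, S > 0, γ ∈ [0,1] with γ > S/(X+S). Then ∂g/∂x evaluated at ((1-γ)X/(2-γ), S) is nonnegative, where g(x,s) = x·Q(x+s) + (X-x)·Q(X+S-(1-γ)(x+s)); that is, Q(z + S) + z·Q'(z + S) - Q(z + γ(X+S)) - z·Q'(z + γ(X+S)) ≥ 0 with z = (1-γ)X/(2-γ). -/
theorem stmt_10 (Q : ℝ → ℝ) (X S γ : ℝ) (hX : 0 < X) (hS : 0 < S)
    (hγ : γ ∈ Set.Icc (0:ℝ) 1) (hγlb : S / (X + S) < γ)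
    (hC : ContDiffOn ℝ 2 Q (Set.Icc 0 (X + S)))
    (hQ' : ∀ u ∈ Set.Icc (0:ℝ) (X + S), deriv Q u < 0)
    (hQ'' : ∀ u ∈ Set.Icc (0:ℝ) (X + S), 0 ≤ deriv (deriv Q) u)
    (hxQ' : ∀ u ∈ Set.Icc (0:ℝ) (X + S), deriv Q u + u * deriv (deriv Q) u < 0) :
    0 ≤ Q ((1 - γ) * X / (2 - γ) + S)
        + (1 - γ) * X / (2 - γ) * deriv Q ((1 - γ) * X / (2 - γ) + S)
        - Q ((1 - γ) * X / (2 - γ) + γ * (X + S))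
        - (1 - γ) * X / (2 - γ) * deriv Q ((1 - γ) * X / (2 - γ) + γ * (X + S)) := by
  obtain ⟨hγ0, hγ1⟩ := hγ
  have hXS : 0 < X + S := by linarith
  have hSγ : S < γ * (X + S) := by
    rw [div_lt_iff₀ hXS] at hγlb; linarith
  -- interior points are differentiable
  have hIoo : Set.Ioo (0:ℝ) (X + S) ⊆ Set.Icc 0 (X + S) := Set.Ioo_subset_Icc_self
  have hQd : ∀ x ∈ Set.Ioo (0:ℝ) (X + S), DifferentiableAt ℝ Q x := by
    intro x hx
    exact ((hC.mono hIoo) x hx).differentiableWithinAt (by norm_num) |>.differentiableAt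
      (isOpen_Ioo.mem_nhds hx)
  have hCd : ContDiffOn ℝ 1 (deriv Q) (Set.Ioo 0 (X + S)) :=
    (hC.mono hIoo).deriv_of_isOpen isOpen_Ioo (by norm_num)
  have hQ'd : ∀ x ∈ Set.Ioo (0:ℝ) (X + S), DifferentiableAt ℝ (deriv Q) x := by
    intro x hx
    exact ((hCd.differentiableOn one_ne_zero) x hx).differentiableAt (isOpen_Ioo.mem_nhds hx)
  rcases eq_or_lt_of_le hγ1 with h1 | h1
  · -- γ = 1 : z = 0, goal is Q(X+S) ≤ Q S
    subst h1
    simp only [sub_self, zero_mul, zero_div, zero_add, zero_mul, one_mul]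
    have hA : AntitoneOn Q (Set.Icc 0 (X + S)) := by
      apply antitoneOn_of_deriv_nonpos (convex_Icc _ _) hC.continuousOn
      · rw [interior_Icc]; exact fun x hx => (hQd x hx).differentiableWithinAt
      · rw [interior_Icc]; exact fun x hx => (hQ' x (hIoo hx)).le
    have := hA (Set.mem_Icc.2 ⟨hS.le, by linarith⟩) (Set.mem_Icc.2 ⟨by linarith, le_rfl⟩)
      (by linarith)
    linarith
  · -- γ < 1
    set z := (1 - γ) * X / (2 - γ) with hz
    have h2γ : (0:ℝ) < 2 - γ := by linarith
    have h1γ : 0 < 1 - γ := by linarith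
    have hz0 : 0 < z := by positivity
    have hzlt : z < (1 - γ) * (X + S) := by
      rw [hz, div_lt_iff₀ h2γ]
      nlinarith [mul_nonneg (mul_nonneg h1γ.le hX.le) h1γ.le, mul_pos (mul_pos h1γ hS) h2γ]
    have ha : 0 < z + S := by linarith
    have hb : z + γ * (X + S) < X + S := by nlinarith
    have hab : z + S ≤ z + γ * (X + S) := by linarith
    have hsub : Set.Icc (z + S) (z + γ * (X + S)) ⊆ Set.Ioo 0 (X + S) := by
      intro t ht
      exact ⟨lt_of_lt_of_le ha ht.1, lt_of_le_of_lt ht.2 hb⟩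
    set F : ℝ → ℝ := fun t => Q t + z * deriv Q t with hF
    have hA : AntitoneOn F (Set.Icc (z + S) (z + γ * (X + S))) := by
      apply antitoneOn_of_deriv_nonpos (convex_Icc _ _)
      · apply ContinuousOn.add (hC.continuousOn.mono (fun t ht => hIoo (hsub ht)))
        exact (continuousOn_const.mul (hCd.continuousOn.mono hsub))
      · intro t ht
        have ht' := hsub (interior_subset ht)
        exact ((hQd t ht').add ((hQ'd t ht').const_mul z)).differentiableWithinAt
      · intro t ht
        rw [interior_Icc] at ht
        have ht' : t ∈ Set.Ioo (0:ℝ) (X + S) := hsub (Set.Ioo_subset_Icc_self ht)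
        have hd : deriv F t = deriv Q t + z * deriv (deriv Q) t := by
          rw [hF, deriv_fun_add (hQd t ht') ((hQ'd t ht').const_mul z), deriv_const_mul z (hQ'd t ht')]
        rw [hd]
        have h1 := hxQ' t (hIoo ht')
        have h2 := hQ'' t (hIoo ht')
        have hzt : z < t := by have := ht.1; linarith
        nlinarith
    have := hA (Set.mem_Icc.2 ⟨le_rfl, hab⟩) (Set.mem_Icc.2 ⟨hab, le_rfl⟩) hab
    simp only [hF] at this
    linarith
end
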